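/- arXiv:1809.03989 — 2 statements merged into one kernel-verified Lean document; each statement's English description precedes it below -/
import Mathlib

section
/- Electrostatic potential of a point move, part (b) of Lemma 2.26: let k > 0 and Λ = [−k, k]. For every ε > 0 there exists p₀ (depending on k and ε) such that for every p ≥ p₀ there exists n₀ (depending on p) such that for every integer n ≥ n₀, every integer M ≥ 1, and all points γ_1, …, γ_M, η_1, …, η_M ∈ Λ, one has |∫_{Λ_n ∖ Λ_p} Ψ_n(s) ds| ≤ ε · (W₁ + M). -/
open MeasureTheory Real Filter Topology
open scoped ENNReal Classical BigOperators

noncomputable section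

/-- `Lam m` is the interval `Λ_m = [-m/2, m/2]`. -/
def Lam (m : ℝ) : Set ℝ := Set.Icc (-(m / 2)) (m / 2)

/-- The `n`-periodic logarithmic potential `g_n`. -/
def gper (n : ℕ) (x : ℝ) : ℝ :=
  if Real.sin (Real.pi * x / n) ≠ 0 then -Real.log |2 * Real.sin (Real.pi * x / n)| else 0

/-- `Ψ(s) = Σ_i (log|s - γ_i| - log|s - η_i|)`. -/
def Psi {M : ℕ} (γ η : Fin M → ℝ) (s : ℝ) : ℝ :=
  ∑ i, (Real.log |s - γ i| - Real.log |s - η i|)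

/-- `Ψ_n(s) = Σ_i (g_n(s - η_i) - g_n(s - γ_i))`. -/
def Psin (n : ℕ) {M : ℕ} (γ η : Fin M → ℝ) (s : ℝ) : ℝ :=
  ∑ i, (gper n (s - η i) - gper n (s - γ i))

/-- `W₁`, the minimal matching cost between the tuples `γ` and `η`. -/
def W1 {M : ℕ} (γ η : Fin M → ℝ) : ℝ :=
  ⨅ σ : Equiv.Perm (Fin M), ∑ i, |γ i - η (σ i)|


/-! Write `B c = ∫ s in Λ_n \ Λ_p, g_n (s - c)`, so that the integral of `Ψ_n` is
`∑ i, (B (η i) - B (γ i))`; pairing the `η i` along an optimal permutation reduces the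
claim to `B` being `ε`-Lipschitz on `Λ`. Since `g_n` is even and `n`-periodic, `B c` is the
integral of `g_n` over `[p/2 - c, n - p/2 - c]`, hence
`B y - B x = ∫ c in x..y, g_n (p/2 - c) - g_n (p/2 + c)`.
On `[a, n/2]` the function `g_n = -log 2 - log (sin (π · / n))` is `1/a`-Lipschitz because
`sin θ / θ` decreases, so with `a = p/2 - k` the integrand is at most `2k / (p/2 - k) ≤ ε`
as soon as `p ≥ 2k + 4k/ε` and `n ≥ p + 2k`. -/

open Set

lemma mul_sin_le_mul_sin {x y : ℝ} (hx : 0 ≤ x) (hxy : x ≤ y) (hy : y ≤ π) :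
    x * sin y ≤ y * sin x := by
  rcases hx.eq_or_lt with rfl | hx
  · simp
  have hy0 : 0 < y := hx.trans_le hxy
  have key := strictConcaveOn_sin_Icc.concaveOn.2 (left_mem_Icc.2 pi_pos.le)
    ⟨hy0.le, hy⟩ (sub_nonneg.2 ((div_le_one hy0).2 hxy)) (div_nonneg hx.le hy0.le)
    (sub_add_cancel 1 (x / y))
  simp only [smul_eq_mul, mul_zero, sin_zero, zero_add, div_mul_cancel₀ x hy0.ne'] at key
  rwa [div_mul_eq_mul_div, div_le_iff₀ hy0, mul_comm (sin x)] at key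

lemma gper_even (n : ℕ) : Function.Even (gper n) := by
  intro x
  simp only [gper, mul_neg, neg_div, sin_neg, neg_ne_zero, abs_neg]

lemma gper_periodic (n : ℕ) : Function.Periodic (gper n) n := by
  intro x
  rcases eq_or_ne (n : ℝ) 0 with hn | hn
  · simp [hn]
  have : π * (x + n) / n = π * x / n + π := by field_simp
  simp only [gper, this, sin_add_pi, neg_ne_zero, mul_neg, abs_neg]

lemma sin_pi_mul_div_ne_zero {n : ℕ} {x : ℝ} (hx : 0 < |x|) (hxn : |x| < n) :
    sin (π * x / n) ≠ 0 := by
  have hn : (0 : ℝ) < n := hx.trans hxn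
  have hθ : |π * x / n| < π := by
    rw [abs_div, abs_mul, abs_of_pos pi_pos, abs_of_pos hn, div_lt_iff₀ hn]
    exact mul_lt_mul_of_pos_left hxn pi_pos
  rw [Ne, sin_eq_zero_iff_of_lt_of_lt (abs_lt.1 hθ).1 (abs_lt.1 hθ).2]
  exact div_ne_zero (mul_ne_zero pi_ne_zero (abs_pos.1 hx)) hn.ne'

lemma continuousOn_gper (n : ℕ) : ContinuousOn (gper n) {x | 0 < |x| ∧ |x| < n} := by
  intro x hx
  have hsin := sin_pi_mul_div_ne_zero hx.1 hx.2
  have hcont : ContinuousAt (fun y => -log |2 * sin (π * y / n)|) x := by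
    refine (continuousAt_log (by simpa using hsin)).comp (by fun_prop) |>.neg
  refine (hcont.congr ?_).continuousWithinAt
  have hopen : IsOpen {y : ℝ | sin (π * y / n) ≠ 0} :=
    isOpen_ne_fun (by fun_prop) continuous_const
  filter_upwards [hopen.mem_nhds hsin] with y hy
  exact (if_pos hy).symm

lemma gper_eq_of_pos {n : ℕ} {x : ℝ} (hx : 0 < x) (hxn : x < n) :
    gper n x = -log 2 - log (sin (π * x / n)) := by
  have hsin : 0 < sin (π * x / n) :=
    sin_pos_of_pos_of_lt_pi (div_pos (mul_pos pi_pos hx) (hx.trans hxn))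
      (by rw [div_lt_iff₀ (hx.trans hxn)]; nlinarith [pi_pos])
  rw [gper, if_pos hsin.ne', abs_of_pos (mul_pos two_pos hsin), log_mul two_ne_zero hsin.ne']
  ring

lemma abs_gper_sub_gper_le {n : ℕ} {a x y : ℝ} (ha : 0 < a) (hx : a ≤ x) (hy : a ≤ y)
    (hxn : x ≤ n / 2) (hyn : y ≤ n / 2) : |gper n x - gper n y| ≤ |x - y| / a := by
  wlog hxy : x ≤ y generalizing x y
  · rw [abs_sub_comm, abs_sub_comm x]
    exact this hy hx hyn hxn (le_of_not_ge hxy)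
  have hn : (0 : ℝ) < n := by linarith
  have hx0 : 0 < x := ha.trans_le hx
  set θx := π * x / n with hθx_def
  set θy := π * y / n with hθy_def
  have hθx : 0 < θx := by positivity
  have hθxy : θx ≤ θy := by rw [hθx_def, hθy_def]; gcongr
  have hθy : θy ≤ π / 2 := by
    rw [div_le_iff₀ hn]; nlinarith [pi_pos]
  have hsx : 0 < sin θx := sin_pos_of_pos_of_lt_pi hθx (by linarith [pi_pos])
  have hmono : sin θx ≤ sin θy := sin_le_sin_of_le_of_le_pi_div_two (by linarith) hθy hθxy
  have hratio : θx * sin θy ≤ θy * sin θx := mul_sin_le_mul_sin hθx.le hθxy (by linarith)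
  have hdiff : gper n x - gper n y = log (sin θy / sin θx) := by
    rw [gper_eq_of_pos hx0 (by linarith), gper_eq_of_pos (hx0.trans_le hxy) (by linarith),
      log_div (by linarith) hsx.ne']
    ring
  rw [hdiff, abs_of_nonneg (log_nonneg ((one_le_div hsx).2 hmono)), abs_sub_comm,
    abs_of_nonneg (sub_nonneg.2 hxy)]
  calc log (sin θy / sin θx) ≤ sin θy / sin θx - 1 :=
        log_le_sub_one_of_pos (div_pos (hsx.trans_le hmono) hsx)
    _ ≤ θy / θx - 1 := by
        rw [sub_le_sub_iff_right, div_le_div_iff₀ hsx hθx]; linarith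
    _ = (y - x) / x := by
        rw [hθx_def, hθy_def]; field_simp
    _ ≤ (y - x) / a := by gcongr

section EvenPeriodic

variable {f : ℝ → ℝ} {L q k : ℝ}

lemma IntervalIntegrable.of_mem_Icc {u v a b : ℝ} (hf : IntervalIntegrable f volume u v)
    (ha : a ∈ Icc u v) (hb : b ∈ Icc u v) : IntervalIntegrable f volume a b :=
  hf.mono_set (uIcc_subset_uIcc (Icc_subset_uIcc ha) (Icc_subset_uIcc hb))

lemma integral_tails_comp_sub_eq_of_periodic (hf_per : Function.Periodic f L)
    (hf : IntervalIntegrable f volume (q - k) (L - q + k)) (hqL : 2 * q ≤ L) {c : ℝ}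
    (hc : c ∈ Icc (-k) k) :
    (∫ s in -(L / 2)..-q, f (s - c)) + ∫ s in q..L / 2, f (s - c) =
      ∫ s in q - c..L - q - c, f s := by
  obtain ⟨hc₁, hc₂⟩ := hc
  have hleft : ∫ s in -(L / 2)..-q, f (s - c) = ∫ s in L / 2 - c..L - q - c, f s := by
    simp_rw [← hf_per (_ - c), sub_add_eq_add_sub, add_sub_assoc,
      intervalIntegral.integral_comp_add_right]
    ring_nf
  rw [hleft, intervalIntegral.integral_comp_sub_right, add_comm,
    intervalIntegral.integral_add_adjacent_intervals] <;>
  apply hf.of_mem_Icc <;> constructor <;> linarith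

lemma integral_sub_integral_eq_of_even_of_periodic (hf_even : Function.Even f)
    (hf_per : Function.Periodic f L)
    (hf : IntervalIntegrable f volume (q - k) (L - q + k)) (hqL : 2 * q ≤ L) {x y : ℝ}
    (hx : x ∈ Icc (-k) k) (hy : y ∈ Icc (-k) k) :
    (∫ s in q - y..L - q - y, f s) - ∫ s in q - x..L - q - x, f s =
      ∫ c in x..y, (f (q - c) - f (q + c)) := by
  obtain ⟨hx₁, hx₂⟩ := hx
  obtain ⟨hy₁, hy₂⟩ := hy
  have hrefl : ∀ c, f (q + c) = f (L - q - c) := fun c => by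
    rw [← hf_even, ← hf_per]; ring_nf
  have hcomp : ∀ d, d - x ∈ Icc (q - k) (L - q + k) → d - y ∈ Icc (q - k) (L - q + k) →
      IntervalIntegrable (fun c => f (d - c)) volume x y := fun d hdx hdy => by
    simpa using (hf.of_mem_Icc hdx hdy).comp_sub_left d
  simp_rw [hrefl]
  rw [intervalIntegral.integral_sub (hcomp q ?_ ?_) (hcomp (L - q) ?_ ?_),
    intervalIntegral.integral_comp_sub_left, intervalIntegral.integral_comp_sub_left,
    intervalIntegral.integral_interval_sub_interval_comm] <;>
  first | apply hf.of_mem_Icc | skip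
  all_goals constructor <;> linarith

end EvenPeriodic

lemma setIntegral_Lam_diff_Lam {f : ℝ → ℝ} {p L : ℝ} (hp : 0 ≤ p) (hpL : p ≤ L)
    (hf : IntegrableOn f (Lam L \ Lam p)) :
    ∫ s in Lam L \ Lam p, f s =
      (∫ s in -(L / 2)..-(p / 2), f s) + ∫ s in p / 2..L / 2, f s := by
  have hsplit : Lam L \ Lam p = Ico (-(L / 2)) (-(p / 2)) ∪ Ioc (p / 2) (L / 2) := by
    ext s
    simp only [Lam, Set.mem_sdiff, mem_Icc, mem_union, mem_Ico, mem_Ioc]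
    grind
  have hdisj : Disjoint (Ico (-(L / 2)) (-(p / 2))) (Ioc (p / 2) (L / 2)) :=
    disjoint_left.2 fun s h₁ h₂ => by linarith [h₁.2, h₂.1]
  rw [hsplit] at hf ⊢
  rw [setIntegral_union hdisj measurableSet_Ioc (hf.mono_set subset_union_left)
      (hf.mono_set subset_union_right), integral_Ico_eq_integral_Ioc,
    intervalIntegral.integral_of_le (by linarith), intervalIntegral.integral_of_le (by linarith)]

lemma integrableOn_gper_sub {n : ℕ} {p c : ℝ} (hc : |c| < p / 2) (hpn : p ≤ n) :
    IntegrableOn (fun s => gper n (s - c)) (Lam n \ Lam p) := by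
  obtain ⟨hc₁, hc₂⟩ := abs_lt.1 hc
  have hsub : Lam n \ Lam p ⊆ Icc (-(n / 2)) (-(p / 2)) ∪ Icc (p / 2) (n / 2) := by
    rintro s ⟨⟨hs₁, hs₂⟩, hs⟩
    simp only [Lam, mem_Icc, not_and_or, not_le] at hs
    rcases hs with hs | hs
    · exact Or.inl ⟨hs₁, hs.le⟩
    · exact Or.inr ⟨hs.le, hs₂⟩
  have hmaps : MapsTo (· - c) (Icc (-(n / 2)) (-(p / 2)) ∪ Icc (p / 2) (n / 2))
      {x | 0 < |x| ∧ |x| < n} := by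
    rintro s (⟨hs₁, hs₂⟩ | ⟨hs₁, hs₂⟩)
    · rw [mem_ofPred_eq, abs_of_neg (by linarith)]; constructor <;> linarith
    · rw [mem_ofPred_eq, abs_of_pos (by linarith)]; constructor <;> linarith
  exact (((continuousOn_gper n).comp (continuous_sub_right c).continuousOn hmaps)
    |>.integrableOn_compact (isCompact_Icc.union isCompact_Icc)).mono_set hsub

lemma intervalIntegrable_gper {n : ℕ} {q k : ℝ} (hk : 0 ≤ k) (hkq : k < q)
    (hqn : 2 * q ≤ n) :
    IntervalIntegrable (gper n) volume (q - k) (n - q + k) := by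
  refine ((continuousOn_gper n).mono fun x hx => ?_).intervalIntegrable
  rw [uIcc_of_le (by linarith)] at hx
  obtain ⟨hx₁, hx₂⟩ := hx
  rw [mem_ofPred_eq, abs_of_pos (by linarith)]
  constructor <;> linarith

lemma abs_setIntegral_gper_sub_sub_le {n : ℕ} {p k x y : ℝ} (hkp : k < p / 2)
    (hpn : p + 2 * k ≤ n) (hx : x ∈ Icc (-k) k) (hy : y ∈ Icc (-k) k) :
    |(∫ s in Lam n \ Lam p, gper n (s - x)) - ∫ s in Lam n \ Lam p, gper n (s - y)| ≤
      2 * k / (p / 2 - k) * |x - y| := by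
  have hk : 0 ≤ k := by linarith [hx.1, hx.2]
  have hint := intervalIntegrable_gper (n := n) hk hkp (by linarith)
  have hB : ∀ c ∈ Icc (-k) k, ∫ s in Lam n \ Lam p, gper n (s - c) =
      ∫ s in p / 2 - c..n - p / 2 - c, gper n s := fun c hc => by
    rw [setIntegral_Lam_diff_Lam (by linarith) (by linarith)
        (integrableOn_gper_sub ((abs_le.2 hc).trans_lt hkp) (by linarith)),
      integral_tails_comp_sub_eq_of_periodic (gper_periodic n) hint (by linarith) hc]
  rw [hB x hx, hB y hy,
    integral_sub_integral_eq_of_even_of_periodic (gper_even n) (gper_periodic n) hint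
      (by linarith) hy hx]
  rw [← Real.norm_eq_abs]
  refine intervalIntegral.norm_integral_le_of_norm_le_const fun c hc => ?_
  obtain ⟨hc₁, hc₂⟩ := uIcc_subset_Icc hy hx (uIoc_subset_uIcc hc)
  rw [Real.norm_eq_abs]
  calc |gper n (p / 2 - c) - gper n (p / 2 + c)|
      ≤ |(p / 2 - c) - (p / 2 + c)| / (p / 2 - k) :=
        abs_gper_sub_gper_le (sub_pos.2 hkp) (by linarith) (by linarith) (by linarith)
          (by linarith)
    _ ≤ 2 * k / (p / 2 - k) := by
        gcongr
        rw [abs_le]; constructor <;> linarith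

lemma integral_Psin_eq_sum {n M : ℕ} {γ η : Fin M → ℝ} {s : Set ℝ}
    (hγ : ∀ i, IntegrableOn (fun x => gper n (x - γ i)) s)
    (hη : ∀ i, IntegrableOn (fun x => gper n (x - η i)) s) :
    ∫ x in s, Psin n γ η x =
      ∑ i, ((∫ x in s, gper n (x - η i)) - ∫ x in s, gper n (x - γ i)) := by
  simp only [Psin]
  rw [integral_finsetSum]
  · exact Finset.sum_congr rfl fun i _ => integral_sub (hη i) (hγ i)
  · exact fun i _ => (hη i).sub (hγ i)

lemma abs_sum_sub_le_mul_W1 {M : ℕ} {B : ℝ → ℝ} {s : Set ℝ} {C : ℝ}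
    (hB : ∀ x ∈ s, ∀ y ∈ s, |B x - B y| ≤ C * |x - y|) {γ η : Fin M → ℝ}
    (hγ : ∀ i, γ i ∈ s) (hη : ∀ i, η i ∈ s) :
    |∑ i, (B (η i) - B (γ i))| ≤ C * W1 γ η := by
  obtain ⟨σ, hσ⟩ :=
    exists_eq_ciInf_of_finite (f := fun σ : Equiv.Perm (Fin M) => ∑ i, |γ i - η (σ i)|)
  rw [W1, ← hσ, Finset.sum_sub_distrib, ← Equiv.sum_comp σ (fun i => B (η i)),
    ← Finset.sum_sub_distrib, Finset.mul_sum]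
  refine (Finset.abs_sum_le_sum_abs _ _).trans (Finset.sum_le_sum fun i _ => ?_)
  rw [abs_sub_comm (γ i)]
  exact hB _ (hη _) _ (hγ _)

/-- **Electrostatic potential of a point move, part (b) of Lemma 2.26**. -/
theorem move_potential_b
    (k : ℝ) (hk : 0 < k) (ε : ℝ) (hε : 0 < ε) :
    ∃ p₀ : ℝ, ∀ p : ℝ, p₀ ≤ p → ∃ n₀ : ℕ, ∀ n : ℕ, n₀ ≤ n →
      ∀ M : ℕ, 1 ≤ M → ∀ γ η : Fin M → ℝ,
        (∀ i, γ i ∈ Set.Icc (-k) k) → (∀ i, η i ∈ Set.Icc (-k) k) →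
        |∫ s in Lam n \ Lam p, Psin n γ η s| ≤ ε * (W1 γ η + M) := by
  refine ⟨2 * k + 4 * k / ε, fun p hp =>
    ⟨⌈p + 2 * k⌉₊, fun n hn M _ γ η hγ hη => ?_⟩⟩
  have hkε : 4 * k / ε * ε = 4 * k := div_mul_cancel₀ _ hε.ne'
  have hkp : k < p / 2 := by linarith [div_pos (by linarith : 0 < 4 * k) hε]
  have hpn : p + 2 * k ≤ n := Nat.ceil_le.1 hn
  have hC : 2 * k / (p / 2 - k) ≤ ε := by
    rw [div_le_iff₀ (by linarith)]; nlinarith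
  have hintegrable : ∀ c ∈ Icc (-k) k, IntegrableOn (fun s => gper n (s - c)) (Lam n \ Lam p) :=
    fun c hc => integrableOn_gper_sub ((abs_le.2 hc).trans_lt hkp) (by linarith)
  rw [integral_Psin_eq_sum (fun i => hintegrable _ (hγ i)) (fun i => hintegrable _ (hη i))]
  calc _ ≤ ε * W1 γ η := abs_sum_sub_le_mul_W1 (fun x hx y hy =>
          (abs_setIntegral_gper_sub_sub_le hkp hpn hx hy).trans (by gcongr)) hγ hη
    _ ≤ ε * (W1 γ η + M) := by gcongr; exact le_add_of_nonneg_right (Nat.cast_nonneg M)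

end
end

section
/- Electrostatic potential of a point move, part (c) of Lemma 2.26: let k > 0 and Λ = [−k, k], and let p ≤ n be integers with [−3k, 3k] ⊆ Λ_p ⊆ Λ_n. For every integer M ≥ 1, all points γ_1, …, γ_M, η_1, …, η_M ∈ Λ, and every x ∈ Λ_n ∖ Λ_p, one has |Ψ_n(x)| ≤ W₁ / dist(x, Λ) and |Ψ_n′(x)| ≤ 8 · W₁ / dist(x, Λ)², where dist(x, Λ) = |x| − k > 0 and Ψ_n′ denotes the derivative of Ψ_n. -/
open MeasureTheory Real Filter Topology
open scoped ENNReal Classical BigOperators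

noncomputable section

/-!
For `t ∈ [-k, k]` the point `x - t` lies in the ball of radius `k` about `x`, which stays at
distance at least `d = |x| - k` from the poles `0` and `±n` of `g_n`. There
`|g_n'| = (π/n)|cot(πy/n)| ≤ 1/d`, because `tan u ≥ u` on `(0, π/2)`, and
`g_n'' = (π/n)² / sin²(πy/n) = (π/n)² + (g_n')² ≤ 8/d²`. Pairing `γᵢ` with `η_{σ i}` for an
optimal matching `σ` and applying the mean value theorem termwise bounds both `Ψ_n` and `Ψ_n'`.
-/

theorem mem_Lam_iff {m x : ℝ} : x ∈ Lam m ↔ |x| ≤ m / 2 := abs_le.symm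

namespace Real

theorem cot_neg (u : ℝ) : cot (-u) = -cot u := by
  simp only [cot_eq_cos_div_sin, cos_neg, sin_neg, div_neg]

theorem cot_pi_sub (u : ℝ) : cot (π - u) = -cot u := by
  simp only [cot_eq_cos_div_sin, cos_pi_sub, sin_pi_sub, neg_div]

theorem cot_le_inv {u : ℝ} (h0 : 0 < u) (hπ : u < π) : cot u ≤ u⁻¹ := by
  rcases lt_or_ge u (π / 2) with h | h
  · rw [← tan_inv_eq_cot]
    exact inv_anti₀ h0 (le_tan h0.le h)
  · rw [cot_eq_cos_div_sin]
    have hcos : cos u ≤ 0 := cos_nonpos_of_pi_div_two_le_of_le h (by linarith [pi_pos])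
    exact (div_nonpos_of_nonpos_of_nonneg hcos (sin_pos_of_pos_of_lt_pi h0 hπ).le).trans
      (inv_nonneg.2 h0.le)

theorem inv_sin_sq (u : ℝ) (h : sin u ≠ 0) : (sin u ^ 2)⁻¹ = 1 + cot u ^ 2 := by
  rw [cot_eq_cos_div_sin]
  field_simp
  linear_combination -sin_sq_add_cos_sq u

end Real

theorem pi_mul_div_mem_Ioo {L y : ℝ} (hy : 0 < y) (hyL : y < L) : π * y / L ∈ Set.Ioo 0 π := by
  have hL : 0 < L := hy.trans hyL
  refine ⟨by positivity, ?_⟩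
  rw [div_lt_iff₀ hL]
  exact mul_lt_mul_of_pos_left hyL pi_pos

theorem sin_pi_mul_div_ne_zero_s9 {L y : ℝ} (hy : 0 < |y|) (hyL : |y| < L) :
    sin (π * y / L) ≠ 0 := by
  obtain ⟨hu0, huπ⟩ := pi_mul_div_mem_Ioo hy hyL
  have hpos := sin_pos_of_pos_of_lt_pi hu0 huπ
  rcases abs_choice y with h | h <;> rw [h] at hpos
  · exact hpos.ne'
  · rw [mul_neg, neg_div, sin_neg] at hpos
    exact (neg_pos.1 hpos).ne

theorem abs_cot_pi_mul_div_le {L y : ℝ} (hy : 0 < |y|) (hyL : |y| < L) :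
    π / L * |cot (π * y / L)| ≤ max |y|⁻¹ (L - |y|)⁻¹ := by
  have hL : 0 < L := hy.trans hyL
  have hyL' : L - |y| ≠ 0 := by linarith
  obtain ⟨hu0, huπ⟩ := pi_mul_div_mem_Ioo hy hyL
  set u := π * |y| / L
  have habs : |cot (π * y / L)| = |cot u| := by
    rcases abs_choice y with h | h <;> simp only [u, h, mul_neg, neg_div, cot_neg, abs_neg]
  have hleft : π / L * cot u ≤ |y|⁻¹ :=
    calc π / L * cot u ≤ π / L * u⁻¹ := by gcongr; exact cot_le_inv hu0 huπ
      _ = |y|⁻¹ := by simp only [u]; field_simp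
  have hright : π / L * -cot u ≤ (L - |y|)⁻¹ :=
    calc π / L * -cot u = π / L * cot (π - u) := by rw [cot_pi_sub]
      _ ≤ π / L * (π - u)⁻¹ := by gcongr; exact cot_le_inv (by linarith) (by linarith)
      _ = (L - |y|)⁻¹ := by simp only [u]; field_simp
  rw [habs, ← abs_of_pos (by positivity : 0 < π / L), ← abs_mul, abs_le]
  constructor <;> linarith [le_max_left |y|⁻¹ (L - |y|)⁻¹, le_max_right |y|⁻¹ (L - |y|)⁻¹]

def gperDeriv (n : ℕ) (y : ℝ) : ℝ := -(π / n * cot (π * y / n))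

theorem hasDerivAt_pi_mul_div (n : ℕ) (y : ℝ) :
    HasDerivAt (fun z : ℝ => π * z / n) (π / n) y := by
  simpa using ((hasDerivAt_id y).const_mul π).div_const (n : ℝ)

theorem hasDerivAt_gper {n : ℕ} {y : ℝ} (hy : sin (π * y / n) ≠ 0) :
    HasDerivAt (gper n) (gperDeriv n y) y := by
  have hlog :=
    (((hasDerivAt_pi_mul_div n y).sin.const_mul 2).log (mul_ne_zero two_ne_zero hy)).neg
  have heq : gper n =ᶠ[𝓝 y] fun z => -log (2 * sin (π * z / n)) := by
    have hcont : Continuous fun z : ℝ => sin (π * z / n) := by fun_prop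
    filter_upwards [hcont.continuousAt.eventually_ne hy] with z hz
    rw [gper, if_pos hz, log_abs]
  refine (hlog.congr_deriv ?_).congr_of_eventuallyEq heq
  rw [gperDeriv, cot_eq_cos_div_sin]
  field_simp

theorem hasDerivAt_gperDeriv {n : ℕ} {y : ℝ} (hy : sin (π * y / n) ≠ 0) :
    HasDerivAt (gperDeriv n) ((π / n) ^ 2 / sin (π * y / n) ^ 2) y := by
  have hlin := hasDerivAt_pi_mul_div n y
  have h : HasDerivAt (fun z => -(π / n * (cos (π * z / n) / sin (π * z / n)))) _ y :=
    ((hlin.cos.div hlin.sin hy).const_mul (π / n)).neg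
  simp only [← cot_eq_cos_div_sin] at h
  refine h.congr_deriv ?_
  set u := π * y / n
  have hnum : -sin u * (π / n) * sin u - cos u * (cos u * (π / n)) = -(π / n) := by
    linear_combination (-(π / n)) * sin_sq_add_cos_sq u
  rw [hnum]
  ring

theorem abs_gperDeriv_le {n : ℕ} {d y : ℝ} (hd : 0 < d) (h1 : d ≤ |y|) (h2 : |y| ≤ n - d) :
    |gperDeriv n y| ≤ d⁻¹ := by
  rw [gperDeriv, abs_neg, abs_mul, abs_of_pos (div_pos pi_pos (by linarith))]
  exact (abs_cot_pi_mul_div_le (by linarith) (by linarith)).trans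
    (max_le (inv_anti₀ hd h1) (inv_anti₀ hd (by linarith)))

theorem sq_div_sin_sq_le {n : ℕ} {d y : ℝ} (hd : 0 < d) (h1 : d ≤ |y|) (h2 : |y| ≤ n - d) :
    (π / n) ^ 2 / sin (π * y / n) ^ 2 ≤ 8 / d ^ 2 := by
  have hsin : sin (π * y / n) ≠ 0 := sin_pi_mul_div_ne_zero_s9 (by linarith) (by linarith)
  have hπn : π / n ≤ 2 / d :=
    calc π / n ≤ 4 / (2 * d) :=
          div_le_div₀ zero_le_four pi_le_four (by positivity) (by linarith)
      _ = 2 / d := by field_simp; norm_num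
  calc (π / n) ^ 2 / sin (π * y / n) ^ 2 = (π / n) ^ 2 + gperDeriv n y ^ 2 := by
        rw [div_eq_mul_inv, inv_sin_sq _ hsin, gperDeriv]; ring
    _ ≤ (2 / d) ^ 2 + (d⁻¹) ^ 2 := by
        rw [← sq_abs (gperDeriv n y)]
        exact add_le_add (pow_le_pow_left₀ (by positivity) hπn 2)
          (pow_le_pow_left₀ (abs_nonneg _) (abs_gperDeriv_le hd h1 h2) 2)
    _ ≤ 8 / d ^ 2 := by
        field_simp
        norm_num

theorem exists_perm_W1_eq {M : ℕ} (γ η : Fin M → ℝ) :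
    ∃ σ : Equiv.Perm (Fin M), W1 γ η = ∑ i, |γ i - η (σ i)| :=
  (exists_eq_ciInf_of_finite).imp fun _ h => h.symm

theorem abs_sum_comp_sub_sub_le_mul_W1 {f f' : ℝ → ℝ} {s : Set ℝ} {C x : ℝ} (hs : Convex ℝ s)
    (hf : ∀ y ∈ s, HasDerivAt f (f' y) y) (hC : ∀ y ∈ s, |f' y| ≤ C)
    {M : ℕ} {γ η : Fin M → ℝ} (hγ : ∀ i, x - γ i ∈ s) (hη : ∀ i, x - η i ∈ s) :
    |∑ i, (f (x - η i) - f (x - γ i))| ≤ C * W1 γ η := by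
  obtain ⟨σ, hσ⟩ := exists_perm_W1_eq γ η
  have hlip : ∀ i, |f (x - η (σ i)) - f (x - γ i)| ≤ C * |γ i - η (σ i)| := fun i => by
    simpa using hs.norm_image_sub_le_of_norm_hasDerivWithin_le
      (fun y hy => (hf y hy).hasDerivWithinAt) (by simpa using hC) (hγ i) (hη (σ i))
  calc |∑ i, (f (x - η i) - f (x - γ i))| = |∑ i, (f (x - η (σ i)) - f (x - γ i))| := by
        rw [Finset.sum_sub_distrib, Finset.sum_sub_distrib,
          Equiv.sum_comp σ fun i => f (x - η i)]
    _ ≤ ∑ i, C * |γ i - η (σ i)| :=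
        (Finset.abs_sum_le_sum_abs _ _).trans (Finset.sum_le_sum fun i _ => hlip i)
    _ = C * W1 γ η := by rw [hσ, Finset.mul_sum]

theorem hasDerivAt_Psin {n M : ℕ} {γ η : Fin M → ℝ} {x : ℝ}
    (hγ : ∀ i, sin (π * (x - γ i) / n) ≠ 0) (hη : ∀ i, sin (π * (x - η i) / n) ≠ 0) :
    HasDerivAt (Psin n γ η) (∑ i, (gperDeriv n (x - η i) - gperDeriv n (x - γ i))) x :=
  HasDerivAt.fun_sum fun i _ => ((hasDerivAt_gper (hη i)).comp_sub_const x (η i)).sub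
    ((hasDerivAt_gper (hγ i)).comp_sub_const x (γ i))

theorem move_potential_c_general
    (k : ℝ) (hk : 0 < k) (p n : ℕ)
    (hp : Set.Icc (-(3 * k)) (3 * k) ⊆ Lam p)
    (M : ℕ) (γ η : Fin M → ℝ)
    (hγ : ∀ i, γ i ∈ Set.Icc (-k) k) (hη : ∀ i, η i ∈ Set.Icc (-k) k)
    (x : ℝ) (hx : x ∈ Lam n \ Lam p) :
    |Psin n γ η x| ≤ W1 γ η / (|x| - k) ∧
      |deriv (Psin n γ η) x| ≤ 8 * W1 γ η / (|x| - k) ^ 2 := by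
  obtain ⟨hxn, hxp⟩ := hx
  rw [mem_Lam_iff] at hxn hxp
  have h3k : 3 * k ≤ p / 2 := (le_abs_self _).trans (mem_Lam_iff.1 (hp ⟨by linarith, le_rfl⟩))
  set d := |x| - k
  have hd : 0 < d := by linarith
  have hann : ∀ y ∈ Metric.closedBall x k, d ≤ |y| ∧ |y| ≤ n - d := fun y hy => by
    rw [Metric.mem_closedBall, Real.dist_eq] at hy
    constructor <;>
      linarith [abs_sub_abs_le_abs_sub x y, abs_sub_abs_le_abs_sub y x, abs_sub_comm x y]
  have hsin : ∀ y ∈ Metric.closedBall x k, sin (π * y / n) ≠ 0 := fun y hy =>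
    sin_pi_mul_div_ne_zero_s9 (by linarith [hann y hy]) (by linarith [hann y hy])
  have hball : ∀ t ∈ Set.Icc (-k) k, x - t ∈ Metric.closedBall x k := fun t ht => by
    rw [Metric.mem_closedBall, Real.dist_eq, sub_sub_cancel_left, abs_neg]
    exact abs_le.2 ht
  have hγ' i := hball _ (hγ i)
  have hη' i := hball _ (hη i)
  refine ⟨?_, ?_⟩
  · calc |Psin n γ η x| ≤ d⁻¹ * W1 γ η :=
          abs_sum_comp_sub_sub_le_mul_W1 (convex_closedBall x k)
            (fun y hy => hasDerivAt_gper (hsin y hy))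
            (fun y hy => abs_gperDeriv_le hd (hann y hy).1 (hann y hy).2) hγ' hη'
      _ = W1 γ η / d := inv_mul_eq_div _ _
  · rw [(hasDerivAt_Psin (fun i => hsin _ (hγ' i)) (fun i => hsin _ (hη' i))).deriv]
    calc _ ≤ 8 / d ^ 2 * W1 γ η :=
          abs_sum_comp_sub_sub_le_mul_W1 (convex_closedBall x k)
            (fun y hy => hasDerivAt_gperDeriv (hsin y hy))
            (fun y hy => (abs_of_nonneg (by positivity)).trans_le
              (sq_div_sin_sq_le hd (hann y hy).1 (hann y hy).2)) hγ' hη'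
      _ = 8 * W1 γ η / d ^ 2 := by ring

/-- **Electrostatic potential of a point move, part (c) of Lemma 2.26**. -/
theorem move_potential_c
    (k : ℝ) (hk : 0 < k) (p n : ℕ) (hpn : p ≤ n)
    (hp : Set.Icc (-(3 * k)) (3 * k) ⊆ Lam p)
    (M : ℕ) (hM : 1 ≤ M) (γ η : Fin M → ℝ)
    (hγ : ∀ i, γ i ∈ Set.Icc (-k) k) (hη : ∀ i, η i ∈ Set.Icc (-k) k)
    (x : ℝ) (hx : x ∈ Lam n \ Lam p) :
    |Psin n γ η x| ≤ W1 γ η / (|x| - k) ∧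
      |deriv (Psin n γ η) x| ≤ 8 * W1 γ η / (|x| - k) ^ 2 :=
  move_potential_c_general k hk p n hp M γ η hγ hη x hx

end
end
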